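/- arXiv:1109.5733 — 7 statements merged into one kernel-verified Lean document; each statement's English description precedes it below -/
import Mathlib

section
/- Let V be a finite-dimensional real vector space and let P ⊆ V be a nonempty polyhedron. Define 𝒫 : [0,1] → (subsets of V) by 𝒫(t) = tP = {t·v : v ∈ P} for t ∈ (0,1] and 𝒫(0) = ρ(P), the recession cone of P. Then 𝒫 is a continuous family of polyhedra in V parameterized by [0,1]. -/
open Set Pointwise

/-- A polyhedron: a finite intersection of closed halfspaces `{v : ⟨uᵢ, v⟩ ≤ cᵢ}`. -/
def IsPolyhedron {V : Type*} [AddCommGroup V] [Module ℝ V] (P : Set V) : Prop :=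
  ∃ (m : ℕ) (u : Fin m → (V →ₗ[ℝ] ℝ)) (c : Fin m → ℝ),
    P = ⋂ i, {v : V | u i v ≤ c i}

/-- The recession cone `ρ(P) = {w : v + w ∈ P for all v ∈ P}`. -/
def recCone {V : Type*} [AddCommGroup V] [Module ℝ V] (P : Set V) : Set V :=
  {w : V | ∀ v ∈ P, v + w ∈ P}

/-- A continuous family of polyhedra in `V` parameterized by `[a, b]`: a function `F` of the
form `F t = ⋂ᵢ {v : ⟨uᵢ, v⟩ ≤ fᵢ t}` with each `fᵢ` continuous on `[a, b]`. -/
def IsContFamilyOfPolyhedra {V : Type*} [AddCommGroup V] [Module ℝ V] (a b : ℝ)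
    (F : ℝ → Set V) : Prop :=
  ∃ (m : ℕ) (u : Fin m → (V →ₗ[ℝ] ℝ)) (f : Fin m → ℝ → ℝ),
    (∀ i, ContinuousOn (f i) (Set.Icc a b)) ∧
    ∀ t ∈ Set.Icc a b, F t = ⋂ i, {v : V | u i v ≤ f i t}

/-! Write `P = ⋂ᵢ {uᵢ ≤ cᵢ}`. Scaling by `t > 0` gives `t • P = ⋂ᵢ {uᵢ ≤ t cᵢ}`, and for `P ≠ ∅` the
recession cone is `⋂ᵢ {uᵢ ≤ 0}`: a direction `w` with `uᵢ w > 0` leaves the halfspace along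
`v + n w`. So the same functionals with right-hand sides `t ↦ t cᵢ` describe the whole family. -/

theorem nonpos_of_forall_add_nsmul_le {α : Type*} [AddCommGroup α] [LinearOrder α]
    [IsOrderedAddMonoid α] [Archimedean α] {a b c : α} (h : ∀ n : ℕ, a + n • b ≤ c) :
    b ≤ 0 := by
  by_contra! hb
  obtain ⟨n, hn⟩ := Archimedean.arch (c - a) hb
  have hlt : c < a + (n + 1) • b := by
    rw [succ_nsmul, ← add_assoc]
    exact lt_add_of_le_of_pos (sub_le_iff_le_add'.mp hn) hb
  exact (h (n + 1)).not_gt hlt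

section Halfspaces

variable {V : Type*} [AddCommGroup V] [Module ℝ V]

theorem add_nsmul_mem_of_mem_recCone {P : Set V} {v w : V} (hv : v ∈ P) (hw : w ∈ recCone P) :
    ∀ n : ℕ, v + n • w ∈ P
  | 0 => by simpa using hv
  | n + 1 => by
    rw [succ_nsmul, ← add_assoc]
    exact hw _ (add_nsmul_mem_of_mem_recCone hv hw n)

variable {ι : Type*} {u : ι → V →ₗ[ℝ] ℝ} {c : ι → ℝ}

theorem recCone_iInter_halfspaces (hne : (⋂ i, {v | u i v ≤ c i}).Nonempty) :
    recCone (⋂ i, {v | u i v ≤ c i}) = ⋂ i, {v | u i v ≤ 0} := by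
  ext w
  simp only [mem_iInter, mem_ofPred_eq]
  constructor
  · intro hw i
    obtain ⟨v, hv⟩ := hne
    refine nonpos_of_forall_add_nsmul_le (a := u i v) (c := c i) fun n => ?_
    have hmem := mem_iInter.mp (add_nsmul_mem_of_mem_recCone hv hw n) i
    simpa only [mem_ofPred_eq, map_add, map_nsmul] using hmem
  · intro hw v hv
    simp only [mem_iInter, mem_ofPred_eq, map_add] at hv ⊢
    exact fun i => by linarith [hv i, hw i]

theorem smul_iInter_halfspaces {t : ℝ} (ht : 0 < t) :
    t • ⋂ i, {v | u i v ≤ c i} = ⋂ i, {v | u i v ≤ t * c i} := by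
  rw [← preimage_smul_inv₀ ht.ne', preimage_iInter]
  congr! 2 with i
  ext v
  simp only [mem_preimage, mem_ofPred_eq, map_smul, smul_eq_mul, inv_mul_le_iff₀ ht]

end Halfspaces

theorem contFamily_smul_recCone_general {V : Type*} [AddCommGroup V] [Module ℝ V]
    (P : Set V) (hP : IsPolyhedron P) (hne : P.Nonempty)
    (F : ℝ → Set V) (hF0 : F 0 = recCone P)
    (hFt : ∀ t ∈ Set.Ioc (0 : ℝ) 1, F t = t • P) :
    IsContFamilyOfPolyhedra 0 1 F := by
  obtain ⟨m, u, c, rfl⟩ := hP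
  refine ⟨m, u, fun i t => t * c i, fun i => (continuous_mul_const _).continuousOn, ?_⟩
  rintro t ⟨ht0, ht1⟩
  rcases ht0.eq_or_lt with rfl | ht
  · simpa only [hF0, zero_mul] using recCone_iInter_halfspaces hne
  · rw [hFt t ⟨ht, ht1⟩, smul_iInter_halfspaces ht]

/-- For a nonempty polyhedron `P`, the family `t ↦ t • P` for `t ∈ (0, 1]`, extended by
`ρ(P)` at `t = 0`, is a continuous family of polyhedra parameterized by `[0, 1]`. -/
theorem contFamily_smul_recCone {V : Type*} [AddCommGroup V] [Module ℝ V]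
    [FiniteDimensional ℝ V] (P : Set V) (hP : IsPolyhedron P) (hne : P.Nonempty)
    (F : ℝ → Set V) (hF0 : F 0 = recCone P)
    (hFt : ∀ t ∈ Set.Ioc (0 : ℝ) 1, F t = t • P) :
    IsContFamilyOfPolyhedra 0 1 F :=
  contFamily_smul_recCone_general P hP hne F hF0 hFt
end

section
/- Let V and W be finite-dimensional real vector spaces, let π : V → W be a surjective linear map, and let 𝒫 be a continuous family of polyhedra in V parameterized by [a,b]. Then t ↦ π(𝒫(t)) is a continuous family of polyhedra in W parameterized by [a,b]. -/
/-!
Fourier–Motzkin elimination. If the kernel of `π` is a line `ℝ ∙ e` and `s` is a linear section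
of `π`, a point `w` lies in `π '' 𝒫(t)` iff some `s w + l • e` satisfies all constraints
`uᵢ ≤ fᵢ t`. With `cᵢ = uᵢ e`, each constraint is an upper or a lower bound on `l` (or does not
involve `l`), so such an `l` exists iff every lower bound is below every upper bound; these
pairwise comparisons are again linear constraints on `w`, with right-hand sides
`cᵢ fⱼ t - cⱼ fᵢ t` that are continuous in `t`. A general surjection is a composition of such
maps, one for each dimension of its kernel.
-/

open Module Set

theorem Finite.exists_between_of_forall_le {α ι κ : Type*} [ConditionallyCompleteLattice α]
    [Nonempty α] [Finite ι] [Finite κ] {lo : ι → α} {hi : κ → α} (h : ∀ i k, lo i ≤ hi k) :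
    ∃ x, (∀ i, lo i ≤ x) ∧ ∀ k, x ≤ hi k := by
  cases isEmpty_or_nonempty ι
  · obtain ⟨x, hx⟩ := (finite_range hi).bddBelow
    exact ⟨x, isEmptyElim, fun k => hx (mem_range_self k)⟩
  · exact ⟨⨆ i, lo i, Finite.le_ciSup lo, fun k => ciSup_le fun i => h i k⟩

theorem exists_add_mul_le_iff {ι : Type*} [Finite ι] (c g r : ι → ℝ) :
    (∃ l : ℝ, ∀ i, g i + l * c i ≤ r i) ↔
      (∀ i, c i = 0 → g i ≤ r i) ∧
        ∀ i, 0 < c i → ∀ j, c j < 0 → c i * g j - c j * g i ≤ c i * r j - c j * r i := by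
  constructor
  · rintro ⟨l, hl⟩
    refine ⟨fun i hi => by simpa [hi] using hl i, fun i hi j hj => ?_⟩
    nlinarith [hl i, hl j, mul_pos hi (neg_pos.2 hj)]
  · rintro ⟨hzero, hpair⟩
    obtain ⟨l, hlo, hhi⟩ := Finite.exists_between_of_forall_le
      (lo := fun j : {j // c j < 0} => (r j - g j) / c j)
      (hi := fun i : {i // 0 < c i} => (r i - g i) / c i) fun j i => by
        rw [div_le_iff_of_neg j.2, div_mul_eq_mul_div, div_le_iff₀ i.2]
        linarith [hpair i i.2 j j.2]
    refine ⟨l, fun k => ?_⟩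
    rcases lt_trichotomy (c k) 0 with hk | hk | hk
    · linarith [(div_le_iff_of_neg hk).1 (hlo ⟨k, hk⟩)]
    · simpa [hk] using hzero k hk
    · linarith [(le_div_iff₀ hk).1 (hhi ⟨k, hk⟩)]

section Elimination

variable {V W : Type*} [AddCommGroup V] [Module ℝ V] [AddCommGroup W] [Module ℝ W]

theorem mem_image_iInter_le_iff {ι : Type*} {π : V →ₗ[ℝ] W} {s : W →ₗ[ℝ] V}
    (hs : π ∘ₗ s = LinearMap.id) {e : V} (hker : LinearMap.ker π = ℝ ∙ e)
    (u : ι → V →ₗ[ℝ] ℝ) (r : ι → ℝ) (w : W) :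
    w ∈ π '' ⋂ i, {v | u i v ≤ r i} ↔ ∃ l : ℝ, ∀ i, u i (s w) + l * u i e ≤ r i := by
  have hπs : ∀ w, π (s w) = w := LinearMap.congr_fun hs
  constructor
  · rintro ⟨v, hv, rfl⟩
    have hker_mem : v - s (π v) ∈ ℝ ∙ e := by
      rw [← hker, LinearMap.mem_ker, map_sub, hπs, sub_self]
    obtain ⟨l, hl⟩ := Submodule.mem_span_singleton.1 hker_mem
    have hv_eq : v = s (π v) + l • e := by rw [hl]; abel
    refine ⟨l, fun i => ?_⟩
    have := mem_iInter.1 hv i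
    rw [hv_eq] at this
    simpa [hπs, mul_comm] using this
  · rintro ⟨l, hl⟩
    have he : π e = 0 := by
      rw [← LinearMap.mem_ker, hker]; exact Submodule.mem_span_singleton_self e
    exact ⟨s w + l • e, mem_iInter.2 fun i => by simpa [mul_comm] using hl i, by simp [hπs, he]⟩

theorem IsContFamilyOfPolyhedra.of_fintype {a b : ℝ} {F : ℝ → Set V}
    {ι : Type*} [Fintype ι] (u : ι → V →ₗ[ℝ] ℝ) (f : ι → ℝ → ℝ)
    (hf : ∀ i, ContinuousOn (f i) (Icc a b))
    (hF : ∀ t ∈ Icc a b, F t = ⋂ i, {v : V | u i v ≤ f i t}) :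
    IsContFamilyOfPolyhedra a b F := by
  let e := (Fintype.equivFin ι).symm
  refine ⟨Fintype.card ι, u ∘ e, f ∘ e, fun i => hf _, fun t ht => ?_⟩
  rw [hF t ht]
  exact (e.surjective.iInter_comp fun i => {v : V | u i v ≤ f i t}).symm

theorem IsContFamilyOfPolyhedra.image_of_ker_eq_span {a b : ℝ} {F : ℝ → Set V}
    (hF : IsContFamilyOfPolyhedra a b F) {π : V →ₗ[ℝ] W} (hπ : Function.Surjective π) {e : V}
    (hker : LinearMap.ker π = ℝ ∙ e) :
    IsContFamilyOfPolyhedra a b (fun t => π '' F t) := by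
  obtain ⟨m, u, f, hf, hFt⟩ := hF
  obtain ⟨s, hs⟩ := π.exists_rightInverse_of_surjective (LinearMap.range_eq_top.2 hπ)
  let c : Fin m → ℝ := fun i => u i e
  let ι := {i // c i = 0} ⊕ ({i // 0 < c i} × {j // c j < 0})
  let U : ι → W →ₗ[ℝ] ℝ := Sum.elim (fun i => u i ∘ₗ s)
    fun p => c p.1 • (u p.2 ∘ₗ s) - c p.2 • (u p.1 ∘ₗ s)
  let G : ι → ℝ → ℝ := Sum.elim (fun i => f i)
    fun p t => c p.1 * f p.2 t - c p.2 * f p.1 t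
  refine .of_fintype U G (Sum.forall.2 ⟨fun i => hf i, fun p => ?_⟩) fun t ht => ?_
  · exact (continuousOn_const.mul (hf _)).sub (continuousOn_const.mul (hf _))
  ext w
  rw [hFt t ht, mem_image_iInter_le_iff hs hker, exists_add_mul_le_iff]
  simp [U, G, ι, c]

theorem IsContFamilyOfPolyhedra.image [FiniteDimensional ℝ V] {a b : ℝ} {F : ℝ → Set V}
    (hF : IsContFamilyOfPolyhedra a b F) {π : V →ₗ[ℝ] W} (hπ : Function.Surjective π) :
    IsContFamilyOfPolyhedra a b (fun t => π '' F t) := by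
  obtain ⟨n, hn⟩ : ∃ n, finrank ℝ (LinearMap.ker π) = n := ⟨_, rfl⟩
  induction n generalizing V with
  | zero =>
    refine hF.image_of_ker_eq_span hπ (e := 0) ?_
    rw [Submodule.span_singleton_eq_bot.2 rfl, ← Submodule.finrank_eq_zero, hn]
  | succ n ih =>
    obtain ⟨e, he, he0⟩ := Submodule.exists_mem_ne_zero_of_ne_bot
      (Submodule.finrank_eq_zero.not.1 (by rw [hn]; exact n.succ_ne_zero))
    set K := ℝ ∙ e
    have hK : K ≤ LinearMap.ker π := (Submodule.span_singleton_le_iff_mem _ _).2 he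
    have hrange : LinearMap.range (K.liftQ π hK) = ⊤ := by
      rw [Submodule.range_liftQ, LinearMap.range_eq_top.2 hπ]
    have hrank : finrank ℝ (LinearMap.ker (K.liftQ π hK)) = n := by
      have h₁ := (K.liftQ π hK).finrank_range_add_finrank_ker
      have h₂ := π.finrank_range_add_finrank_ker
      have h₃ := K.finrank_quotient_add_finrank
      rw [hrange, finrank_top] at h₁
      rw [LinearMap.range_eq_top.2 hπ, finrank_top] at h₂
      rw [finrank_span_singleton he0] at h₃
      omega
    have hfactor : (fun t => π '' F t) = fun t => K.liftQ π hK '' (K.mkQ '' F t) := by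
      ext t : 1
      rw [image_image]; rfl
    rw [hfactor]
    exact ih (hF.image_of_ker_eq_span K.mkQ_surjective K.ker_mkQ)
      (LinearMap.range_eq_top.1 hrange) hrank

end Elimination

theorem contFamily_image_general {V W : Type*} [AddCommGroup V] [Module ℝ V] [FiniteDimensional ℝ V]
    [AddCommGroup W] [Module ℝ W]
    (π : V →ₗ[ℝ] W) (hπ : Function.Surjective π) (a b : ℝ)
    (F : ℝ → Set V) (hF : IsContFamilyOfPolyhedra a b F) :
    IsContFamilyOfPolyhedra a b (fun t => π '' F t) :=
  hF.image hπ

/-- The image of a continuous family of polyhedra under a surjective linear map is a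
continuous family of polyhedra. -/
theorem contFamily_image {V W : Type*} [AddCommGroup V] [Module ℝ V] [FiniteDimensional ℝ V]
    [AddCommGroup W] [Module ℝ W] [FiniteDimensional ℝ W]
    (π : V →ₗ[ℝ] W) (hπ : Function.Surjective π) (a b : ℝ) (hab : a ≤ b)
    (F : ℝ → Set V) (hF : IsContFamilyOfPolyhedra a b F) :
    IsContFamilyOfPolyhedra a b (fun t => π '' F t) :=
  contFamily_image_general π hπ a b F hF
end

section
/- Let V and W be finite-dimensional real vector spaces, let π : V → W be a surjective linear map, and let P ⊆ V be a polyhedron. Then π(P) is a polyhedron in W; in particular, π(P) is a closed subset of W. -/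
open Set Submodule Pointwise

theorem exists_forall_le_mul_iff {ι : Type*} [Finite ι] (a b : ι → ℝ) :
    (∃ t, ∀ i, b i ≤ a i * t) ↔
      (∀ i, a i = 0 → b i ≤ 0) ∧ ∀ i j, 0 < a i → a j < 0 → a i * b j ≤ a j * b i := by
  constructor
  · rintro ⟨t, ht⟩
    refine ⟨fun i hi => by simpa [hi] using ht i, fun i j hi hj => ?_⟩
    nlinarith [mul_le_mul_of_nonneg_left (ht j) hi.le, mul_le_mul_of_nonpos_left (ht i) hj.le]
  · rintro ⟨hzero, hpair⟩
    -- `a i > 0` gives the lower bound `b i / a i ≤ t`, `a j < 0` the upper bound `t ≤ b j / a j`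
    set L := (fun i => b i / a i) '' {i | 0 < a i}
    set U := (fun j => b j / a j) '' {j | a j < 0}
    have hLU : ∀ l ∈ L, ∀ u ∈ U, l ≤ u := by
      rintro _ ⟨i, hi, rfl⟩ _ ⟨j, hj, rfl⟩
      rw [div_le_iff₀ hi, div_mul_eq_mul_div, le_div_iff_of_neg hj]
      linarith [hpair i j hi hj]
    obtain ⟨t, htL, htU⟩ : ∃ t, t ∈ upperBounds L ∧ t ∈ lowerBounds U := by
      rcases L.eq_empty_or_nonempty with hL | hL
      · obtain ⟨t, ht⟩ := (toFinite U).bddBelow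
        exact ⟨t, by simp [hL], ht⟩
      · exact ⟨sSup L, fun l hl => le_csSup (toFinite L).bddAbove hl,
          fun u hu => csSup_le hL fun l hl => hLU l hl u hu⟩
    refine ⟨t, fun i => ?_⟩
    rcases lt_trichotomy (a i) 0 with hi | hi | hi
    · exact mul_comm t (a i) ▸ (le_div_iff_of_neg hi).mp (htU ⟨i, hi, rfl⟩)
    · simpa [hi] using hzero i hi
    · exact mul_comm t (a i) ▸ (div_le_iff₀ hi).mp (htL ⟨i, hi, rfl⟩)

section

variable {V W : Type*} [AddCommGroup V] [Module ℝ V] [AddCommGroup W] [Module ℝ W]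

theorem isPolyhedron_iInter {ι : Type*} [Finite ι] (u : ι → V →ₗ[ℝ] ℝ) (c : ι → ℝ) :
    IsPolyhedron (⋂ i, {v : V | u i v ≤ c i}) := by
  obtain ⟨m, ⟨e⟩⟩ := Finite.exists_equiv_fin ι
  exact ⟨m, u ∘ e.symm, c ∘ e.symm, (e.symm.surjective.iInter_comp _).symm⟩

theorem IsPolyhedron.inter {P Q : Set V} (hP : IsPolyhedron P) (hQ : IsPolyhedron Q) :
    IsPolyhedron (P ∩ Q) := by
  obtain ⟨m, u, c, rfl⟩ := hP
  obtain ⟨n, u', c', rfl⟩ := hQ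
  simpa only [iInter_sum, Sum.elim_inl, Sum.elim_inr] using
    isPolyhedron_iInter (Sum.elim u u') (Sum.elim c c')

theorem IsPolyhedron.preimage {P : Set V} (hP : IsPolyhedron P) (f : W →ₗ[ℝ] V) :
    IsPolyhedron (f ⁻¹' P) := by
  obtain ⟨m, u, c, rfl⟩ := hP
  exact ⟨m, fun i => u i ∘ₗ f, c, by ext; simp⟩

theorem IsPolyhedron.add_span_singleton {P : Set V} (hP : IsPolyhedron P) (x : V) :
    IsPolyhedron (P + (ℝ ∙ x : Set V)) := by
  obtain ⟨m, u, c, rfl⟩ := hP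
  set a : Fin m → ℝ := fun i => u i x
  suffices P_add_eq : (⋂ i, {v : V | u i v ≤ c i}) + (ℝ ∙ x : Set V) =
      (⋂ i : {i // a i = 0}, {v | u i v ≤ c i}) ∩
        ⋂ p : {i // 0 < a i} × {j // a j < 0},
          {v | (a p.1 • u p.2 - a p.2 • u p.1) v ≤ a p.1 * c p.2 - a p.2 * c p.1} from
    P_add_eq ▸ (isPolyhedron_iInter _ _).inter (isPolyhedron_iInter _ _)
  ext v
  have hmem : v ∈ (⋂ i, {v : V | u i v ≤ c i}) + (ℝ ∙ x : Set V) ↔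
      ∃ t, ∀ i, u i v - c i ≤ a i * t := by
    simp only [mem_add, SetLike.mem_coe, mem_span_singleton]
    constructor
    · rintro ⟨p, hp, _, ⟨t, rfl⟩, rfl⟩
      refine ⟨t, fun i => ?_⟩
      have := mem_iInter.mp hp i
      simp only [mem_ofPred_eq, map_add, map_smul, smul_eq_mul, a] at this ⊢
      linarith
    · rintro ⟨t, ht⟩
      refine ⟨v - t • x, mem_iInter.mpr fun i => ?_, _, ⟨t, rfl⟩, sub_add_cancel v _⟩
      simp only [mem_ofPred_eq, map_sub, map_smul, smul_eq_mul]
      linarith [ht i]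
  rw [hmem, exists_forall_le_mul_iff]
  simp only [mem_inter_iff, mem_iInter, mem_ofPred_eq, Subtype.forall, Prod.forall,
    LinearMap.sub_apply, LinearMap.smul_apply, smul_eq_mul, sub_nonpos]
  refine and_congr Iff.rfl ⟨fun h i hi j hj => ?_, fun h i j hi hj => ?_⟩
  · linarith [h i j hi hj]
  · linarith [h i hi j hj]

theorem IsPolyhedron.add_submodule {P : Set V} (hP : IsPolyhedron P) {K : Submodule ℝ V}
    (hK : K.FG) : IsPolyhedron (P + (K : Set V)) := by
  classical
  obtain ⟨s, rfl⟩ := hK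
  induction s using Finset.induction_on with
  | empty => simpa using hP
  | insert x s _ ih =>
    rw [Finset.coe_insert, span_insert, coe_sup, add_comm (ℝ ∙ x : Set V), ← add_assoc]
    exact ih.add_span_singleton x

theorem IsPolyhedron.image_of_surjective [FiniteDimensional ℝ V] {P : Set V}
    (hP : IsPolyhedron P) (π : V →ₗ[ℝ] W) (hπ : Function.Surjective π) :
    IsPolyhedron (π '' P) := by
  obtain ⟨s, hs⟩ := π.exists_rightInverse_of_surjective (LinearMap.range_eq_top.mpr hπ)
  have hπs (w : W) : π (s w) = w := LinearMap.congr_fun hs w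
  suffices π '' P = s ⁻¹' (P + (LinearMap.ker π : Set V)) from
    this ▸ (hP.add_submodule (IsNoetherian.noetherian _)).preimage s
  ext w
  simp only [mem_image, mem_preimage, mem_add, SetLike.mem_coe, LinearMap.mem_ker]
  constructor
  · rintro ⟨p, hp, rfl⟩
    exact ⟨p, hp, s (π p) - p, by simp [hπs], add_sub_cancel p _⟩
  · rintro ⟨p, hp, k, hk, hpk⟩
    exact ⟨p, hp, by rw [← hπs w, ← hpk, map_add, hk, add_zero]⟩

end

theorem IsPolyhedron.isClosed {V : Type*} [NormedAddCommGroup V] [NormedSpace ℝ V]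
    [FiniteDimensional ℝ V] {P : Set V} (hP : IsPolyhedron P) : IsClosed P := by
  obtain ⟨m, u, c, rfl⟩ := hP
  exact isClosed_iInter fun i => isClosed_Iic.preimage (u i).continuous_of_finiteDimensional

/-- The image of a polyhedron under a surjective linear map of finite-dimensional real
vector spaces is a polyhedron; in particular it is closed. -/
theorem image_polyhedron {V W : Type*} [NormedAddCommGroup V] [NormedSpace ℝ V]
    [FiniteDimensional ℝ V] [NormedAddCommGroup W] [NormedSpace ℝ W]
    [FiniteDimensional ℝ W] (π : V →ₗ[ℝ] W) (hπ : Function.Surjective π)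
    (P : Set V) (hP : IsPolyhedron P) :
    IsPolyhedron (π '' P) ∧ IsClosed (π '' P) := by
  have hπP := hP.image_of_surjective π hπ
  exact ⟨hπP, hπP.isClosed⟩
end

section
/- Let 𝒫 be a continuous family of polyhedra in a finite-dimensional real vector space V parameterized by [a,b]. Then the set {t ∈ [a,b] : 𝒫(t) ≠ ∅} is a closed subset of [a,b]. -/
open Finset Pointwise

section ConicHull

variable {ι E : Type*} [AddCommGroup E] [Module ℝ E]

def conicHull (g : ι → E) (s : Finset ι) : Set E :=
  {x | ∃ l : ι → ℝ, (∀ i ∈ s, 0 ≤ l i) ∧ ∑ i ∈ s, l i • g i = x}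

variable {g : ι → E} {s t : Finset ι} {x : E}

lemma conicHull_mono (hts : t ⊆ s) : conicHull g t ⊆ conicHull g s := by
  rintro x ⟨l, hl, rfl⟩
  refine ⟨(t : Set ι).indicator l, fun i _ => Set.indicator_nonneg hl i, ?_⟩
  simp_rw [← Set.indicator_smul_apply_left]
  exact sum_indicator_subset _ hts

lemma exists_pos_of_not_linearIndepOn (h : ¬ LinearIndepOn ℝ g s) :
    ∃ d : ι → ℝ, ∑ i ∈ s, d i • g i = 0 ∧ ∃ i ∈ s, 0 < d i := by
  obtain ⟨d, hd, i, hi, hdi⟩ : ∃ d : ι → ℝ, ∑ i ∈ s, d i • g i = 0 ∧ ∃ i ∈ s, d i ≠ 0 := by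
    simpa [linearIndepOn_finset_iff] using h
  rcases hdi.lt_or_gt with hneg | hpos
  · exact ⟨-d, by simp [neg_smul, hd], i, hi, neg_pos.mpr hneg⟩
  · exact ⟨d, hd, i, hi, hpos⟩

/-- The reduction step of Carathéodory's theorem for cones: moving along a linear relation
among the generators until a first coefficient vanishes. -/
lemma exists_mem_conicHull_erase [DecidableEq ι] (h : ¬ LinearIndepOn ℝ g s)
    (hx : x ∈ conicHull g s) : ∃ j ∈ s, x ∈ conicHull g (s.erase j) := by
  obtain ⟨l, hl, rfl⟩ := hx
  obtain ⟨d, hd, i, his, hdi⟩ := exists_pos_of_not_linearIndepOn h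
  obtain ⟨j, hj, hmin⟩ := (s.filter (0 < d ·)).exists_min_image (fun i => l i / d i)
    ⟨i, mem_filter.mpr ⟨his, hdi⟩⟩
  obtain ⟨hjs, hdj⟩ := mem_filter.mp hj
  set θ := l j / d j
  have hθ : 0 ≤ θ := div_nonneg (hl j hjs) hdj.le
  refine ⟨j, hjs, fun i => l i - θ * d i, fun i hi => ?_, ?_⟩
  · have his := mem_of_mem_erase hi
    rcases le_or_gt (d i) 0 with hdi | hdi
    · nlinarith [hl i his]
    · have := hmin i (mem_filter.mpr ⟨his, hdi⟩)
      rw [le_div_iff₀ hdi] at this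
      linarith
  · rw [sum_erase _ (by simp [θ, div_mul_cancel₀ _ hdj.ne'])]
    simp only [sub_smul, mul_smul, sum_sub_distrib, ← smul_sum, hd, smul_zero, sub_zero]

lemma exists_linearIndepOn_of_mem_conicHull (hx : x ∈ conicHull g s) :
    ∃ t ⊆ s, LinearIndepOn ℝ g t ∧ x ∈ conicHull g t := by
  classical
  induction s using Finset.strongInduction with
  | H s ih =>
    by_cases hind : LinearIndepOn ℝ g s
    · exact ⟨s, Subset.rfl, hind, hx⟩
    · obtain ⟨j, hj, hxj⟩ := exists_mem_conicHull_erase hind hx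
      obtain ⟨t, hts, ht, hxt⟩ := ih _ (erase_ssubset hj) hxj
      exact ⟨t, hts.trans (erase_subset _ _), ht, hxt⟩

lemma conicHull_sumElim {κ : Type*} [Fintype ι] [Fintype κ] (g : ι → E) (h : κ → E) :
    conicHull (Sum.elim g h) univ = conicHull g univ + conicHull h univ := by
  ext x
  simp only [conicHull, Set.mem_add, Set.mem_ofPred_eq, mem_univ, forall_const,
    Fintype.sum_sum_type, Sum.elim_inl, Sum.elim_inr]
  constructor
  · rintro ⟨l, hl, rfl⟩
    exact ⟨_, ⟨l ∘ Sum.inl, fun _ => hl _, rfl⟩, _, ⟨l ∘ Sum.inr, fun _ => hl _, rfl⟩, rfl⟩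
  · rintro ⟨_, ⟨l₁, hl₁, rfl⟩, _, ⟨l₂, hl₂, rfl⟩, rfl⟩
    exact ⟨Sum.elim l₁ l₂, Sum.forall.mpr ⟨hl₁, hl₂⟩, rfl⟩

lemma conicHull_comp {F : Type*} [AddCommGroup F] [Module ℝ F] (A : E →ₗ[ℝ] F) :
    conicHull (A ∘ g) s = A '' conicHull g s := by
  ext y
  simp only [conicHull, Set.mem_image, Set.mem_ofPred_eq, Function.comp_apply]
  constructor
  · rintro ⟨l, hl, rfl⟩
    exact ⟨_, ⟨l, hl, rfl⟩, by simp⟩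
  · rintro ⟨_, ⟨l, hl, rfl⟩, rfl⟩
    exact ⟨l, hl, by simp⟩

lemma Module.Basis.conicHull_sumElim_neg [Fintype ι] (b : Module.Basis ι ℝ E) :
    conicHull (Sum.elim b (-⇑b)) univ = Set.univ := by
  refine Set.eq_univ_of_forall fun v => ⟨Sum.elim (fun i => max (b.repr v i) 0)
    (fun i => max (-b.repr v i) 0), by simp, ?_⟩
  simp only [Fintype.sum_sum_type, Sum.elim_inl, Sum.elim_inr, Pi.neg_apply, smul_neg,
    sum_neg_distrib, ← sub_eq_add_neg, ← sum_sub_distrib, ← sub_smul,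
    max_zero_sub_max_neg_zero_eq_self, b.sum_repr]

lemma conicHull_single_one [Fintype ι] [DecidableEq ι] :
    conicHull (fun i => (Pi.single i 1 : ι → ℝ)) univ = Set.Ici 0 := by
  ext c
  constructor
  · rintro ⟨l, hl, rfl⟩
    rw [← pi_eq_sum_univ']
    exact fun i => hl i (mem_univ i)
  · exact fun hc => ⟨c, fun i _ => hc i, (pi_eq_sum_univ' c).symm⟩

lemma conicHull_eq_image_of_subtype :
    conicHull g t = Fintype.linearCombination ℝ (fun i : t => g i) '' {l | 0 ≤ l} := by
  classical
  ext x
  simp only [conicHull, Set.mem_ofPred_eq, Set.mem_image, Fintype.linearCombination_apply]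
  constructor
  · rintro ⟨l, hl, rfl⟩
    exact ⟨fun i => l i, fun i => hl i i.2, sum_coe_sort t fun i => l i • g i⟩
  · rintro ⟨l, hl, rfl⟩
    refine ⟨fun i => if h : i ∈ t then l ⟨i, h⟩ else 0,
      fun i hi => by simpa [hi] using hl ⟨i, hi⟩, ?_⟩
    rw [← sum_coe_sort t]
    exact sum_congr rfl fun i _ => by simp

variable [TopologicalSpace E] [IsTopologicalAddGroup E] [ContinuousSMul ℝ E] [T2Space E]

lemma LinearIndepOn.isClosed_conicHull (ht : LinearIndepOn ℝ g t) :
    IsClosed (conicHull g t) := by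
  rw [conicHull_eq_image_of_subtype]
  refine (LinearMap.isClosedEmbedding_of_injective ?_).isClosedMap _ ?_
  · exact LinearMap.ker_eq_bot.mpr ht.fintypeLinearCombination_injective
  · exact isClosed_le continuous_const continuous_id

lemma isClosed_conicHull : IsClosed (conicHull g s) := by
  have hunion : conicHull g s =
      ⋃ t ∈ {t : Finset ι | t ⊆ s ∧ LinearIndepOn ℝ g t}, conicHull g t := by
    refine Set.Subset.antisymm (fun x hx => ?_)
      (Set.iUnion₂_subset fun t ht => conicHull_mono ht.1)
    obtain ⟨t, hts, ht, hxt⟩ := exists_linearIndepOn_of_mem_conicHull hx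
    exact Set.mem_biUnion ⟨hts, ht⟩ hxt
  rw [hunion]
  exact (s.powerset.finite_toSet.subset fun t ht => mem_powerset.mpr ht.1).isClosed_biUnion
    fun t ht => ht.2.isClosed_conicHull

end ConicHull

lemma setOf_exists_forall_le_eq {V ι : Type*} [AddCommGroup V] [Module ℝ V]
    (u : ι → V →ₗ[ℝ] ℝ) :
    {c : ι → ℝ | ∃ v, ∀ i, u i v ≤ c i} = Set.range (LinearMap.pi u) + Set.Ici 0 := by
  ext c
  simp only [Set.mem_ofPred_eq, Set.mem_add, Set.mem_range, Set.mem_Ici, exists_exists_eq_and]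
  constructor
  · rintro ⟨v, hv⟩
    exact ⟨v, c - LinearMap.pi u v, fun i => sub_nonneg.mpr (hv i), add_sub_cancel _ _⟩
  · rintro ⟨v, p, hp, rfl⟩
    exact ⟨v, fun i => le_add_of_nonneg_right (hp i)⟩

lemma isClosed_setOf_exists_forall_le {V ι : Type*} [AddCommGroup V] [Module ℝ V]
    [FiniteDimensional ℝ V] [Fintype ι] (u : ι → V →ₗ[ℝ] ℝ) :
    IsClosed {c : ι → ℝ | ∃ v, ∀ i, u i v ≤ c i} := by
  classical
  let b := Module.finBasis ℝ V
  rw [setOf_exists_forall_le_eq, ← Set.image_univ, ← b.conicHull_sumElim_neg, ← conicHull_comp,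
    ← conicHull_single_one, ← conicHull_sumElim]
  exact isClosed_conicHull

theorem contFamily_nonempty_closed_general {V : Type*} [AddCommGroup V] [Module ℝ V]
    [FiniteDimensional ℝ V] (a b : ℝ) (F : ℝ → Set V)
    (hF : IsContFamilyOfPolyhedra a b F) :
    IsClosed {t | t ∈ Set.Icc a b ∧ (F t).Nonempty} := by
  obtain ⟨m, u, f, hf, hF⟩ := hF
  have hset : {t | t ∈ Set.Icc a b ∧ (F t).Nonempty} =
      Set.Icc a b ∩ (fun t i => f i t) ⁻¹' {c | ∃ v, ∀ i, u i v ≤ c i} := by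
    ext t
    refine and_congr_right fun ht => ?_
    simp [hF t ht, Set.Nonempty]
  rw [hset]
  exact (continuousOn_pi.mpr hf).preimage_isClosed_of_isClosed isClosed_Icc
    (isClosed_setOf_exists_forall_le u)

/-- For a continuous family of polyhedra parameterized by `[a, b]`, the set of parameters `t`
for which the polyhedron is nonempty is a closed subset of `[a, b]`. -/
theorem contFamily_nonempty_closed {V : Type*} [AddCommGroup V] [Module ℝ V]
    [FiniteDimensional ℝ V] (a b : ℝ) (hab : a ≤ b) (F : ℝ → Set V)
    (hF : IsContFamilyOfPolyhedra a b F) :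
    IsClosed {t | t ∈ Set.Icc a b ∧ (F t).Nonempty} :=
  contFamily_nonempty_closed_general a b F hF
end

section
/- Let P and P' be polyhedra in ℝ^n and let σ ⊆ ℝ^n be a polyhedral cone such that σ ⊆ ρ(P) and relint(σ) ∩ ρ(P') ≠ ∅, where relint denotes relative interior. Let π_σ : ℝ^n → ℝ^n/span(σ) be the quotient map modulo the linear span of σ. Then π_σ(P) ∩ π_σ(P') = π_σ(P ∩ P'). -/
open Set

/-- A polyhedral cone: a finite intersection of halfspaces `{v : ⟨uᵢ, v⟩ ≤ 0}`. -/
def IsPolyCone {V : Type*} [AddCommGroup V] [Module ℝ V] (σ : Set V) : Prop :=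
  ∃ (m : ℕ) (u : Fin m → (V →ₗ[ℝ] ℝ)), σ = ⋂ i, {v : V | u i v ≤ 0}

/-!
Let `x ∈ P` and `x' ∈ P'` have the same image, so `z = x' - x ∈ span σ`, and pick
`w ∈ relint σ ∩ ρ(P')`. Since `w` is a relative interior point of the polyhedral cone `σ`,
`t • w + z ∈ σ` for all large `t`. Then `y = x' + t • w = x + (t • w + z)` lies in `P'` because
`w ∈ ρ(P')`, lies in `P` because `σ ⊆ ρ(P)`, and has the same image as `x'`.
-/

open Filter Topology

lemma nsmul_mem_recCone {V : Type*} [AddCommGroup V] [Module ℝ V] {P : Set V} {w : V}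
    (hw : w ∈ recCone P) (k : ℕ) : k • w ∈ recCone P := by
  induction k with
  | zero => simp [recCone]
  | succ k ih => exact fun v hv => by simpa [succ_nsmul, ← add_assoc] using hw _ (ih v hv)

section

variable {V : Type*} [AddCommGroup V] [Module ℝ V] [TopologicalSpace V] [ContinuousAdd V]
  [ContinuousSMul ℝ V]

lemma eventually_smul_sub_add_mem_of_mem_intrinsicInterior {s : Set V} {w v : V}
    (hw : w ∈ intrinsicInterior ℝ s) (hv : v ∈ affineSpan ℝ s) :
    ∀ᶠ ε in 𝓝 (0 : ℝ), ε • (w - v) + w ∈ s := by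
  obtain ⟨y, hy, rfl⟩ := hw
  let g : ℝ → affineSpan ℝ s := fun ε =>
    ⟨ε • (y - v) + y, by simpa using (affineSpan ℝ s).smul_vsub_vadd_mem ε y.2 hv y.2⟩
  have hg : Continuous g := by fun_prop
  have hg0 : g 0 = y := by ext; simp [g]
  have : g ⁻¹' interior ((↑) ⁻¹' s) ∈ 𝓝 (0 : ℝ) :=
    (isOpen_interior.preimage hg).mem_nhds (by rwa [mem_preimage, hg0])
  filter_upwards [this] with ε hε using (interior_subset hε : g ε ∈ (↑) ⁻¹' s)

lemma span_le_ker_of_mem_intrinsicInterior {s : Set V} {f : V →ₗ[ℝ] ℝ}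
    (hf : ∀ v ∈ s, f v ≤ 0) {w : V} (hw : w ∈ intrinsicInterior ℝ s) (hfw : f w = 0) :
    Submodule.span ℝ s ≤ LinearMap.ker f := by
  refine Submodule.span_le.mpr fun v hv => (hf v hv).antisymm ?_
  obtain ⟨ε, hεs, hε⟩ := ((eventually_nhdsWithin_of_eventually_nhds
    (eventually_smul_sub_add_mem_of_mem_intrinsicInterior hw (subset_affineSpan ℝ s hv))).and
    (self_mem_nhdsWithin (s := Ioi (0 : ℝ)))).exists
  have := hf _ hεs
  simp only [map_add, map_smul, map_sub, hfw, smul_eq_mul] at this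
  nlinarith

/-- A facet inequality of `σ` is either strict at the relative interior point `w`, so that large
multiples of `w` absorb `z`, or it is an equality on all of `span σ`. -/
lemma IsPolyCone.eventually_nsmul_add_mem {σ : Set V} (hσ : IsPolyCone σ)
    {w z : V} (hw : w ∈ intrinsicInterior ℝ σ) (hz : z ∈ Submodule.span ℝ σ) :
    ∀ᶠ t : ℕ in atTop, t • w + z ∈ σ := by
  obtain ⟨m, u, rfl⟩ := hσ
  have hσu : ∀ i, ∀ v ∈ ⋂ j, {v : V | u j v ≤ 0}, u i v ≤ 0 := fun i v hv => mem_iInter.mp hv i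
  simp only [mem_iInter, mem_ofPred_eq, eventually_all, map_add, map_nsmul, nsmul_eq_mul]
  intro i
  rcases (hσu i w (intrinsicInterior_subset hw)).lt_or_eq with hneg | hzero
  · filter_upwards [eventually_ge_atTop ⌈u i z / -u i w⌉₊] with t ht
    have := (div_le_iff₀ (neg_pos.mpr hneg)).mp (Nat.ceil_le.mp ht)
    linarith
  · have : u i z = 0 := span_le_ker_of_mem_intrinsicInterior (hσu i) hw hzero hz
    exact .of_forall fun t => by simp [hzero, this]

end

theorem image_inter_quotient_general {n : ℕ} (P P' σ : Set (Fin n → ℝ))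
    (hσ : IsPolyCone σ)
    (h1 : σ ⊆ recCone P)
    (h2 : (intrinsicInterior ℝ σ ∩ recCone P').Nonempty) :
    ((Submodule.span ℝ σ).mkQ '' P) ∩ ((Submodule.span ℝ σ).mkQ '' P') =
      (Submodule.span ℝ σ).mkQ '' (P ∩ P') := by
  refine (image_inter_subset _ _ _).antisymm' ?_
  rintro _ ⟨⟨x, hx, rfl⟩, x', hx', hxx'⟩
  obtain ⟨w, hwσ, hwP'⟩ := h2
  have hdiff : x' - x ∈ Submodule.span ℝ σ := (Submodule.Quotient.eq _).mp hxx'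
  obtain ⟨t, ht⟩ := (hσ.eventually_nsmul_add_mem hwσ hdiff).exists
  refine ⟨x' + t • w, ⟨?_, nsmul_mem_recCone hwP' t x' hx'⟩, ?_⟩
  · convert h1 ht x hx using 1
    abel
  · rw [← hxx']
    refine (Submodule.Quotient.eq _).mpr ?_
    simpa using nsmul_mem (Submodule.subset_span (R := ℝ) (intrinsicInterior_subset hwσ)) t

/-- If `P, P'` are polyhedra in `ℝⁿ` and `σ` is a polyhedral cone with `σ ⊆ ρ(P)` and
`relint(σ) ∩ ρ(P') ≠ ∅`, then for the projection `π_σ : ℝⁿ → ℝⁿ/span(σ)` one has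
`π_σ(P) ∩ π_σ(P') = π_σ(P ∩ P')`. -/
theorem image_inter_quotient {n : ℕ} (P P' σ : Set (Fin n → ℝ))
    (hP : IsPolyhedron P) (hP' : IsPolyhedron P') (hσ : IsPolyCone σ)
    (h1 : σ ⊆ recCone P)
    (h2 : (intrinsicInterior ℝ σ ∩ recCone P').Nonempty) :
    ((Submodule.span ℝ σ).mkQ '' P) ∩ ((Submodule.span ℝ σ).mkQ '' P') =
      (Submodule.span ℝ σ).mkQ '' (P ∩ P') :=
  image_inter_quotient_general P P' σ hσ h1 h2
end

section
/- Let σ₀ ⊆ ℝ^n be a pointed polyhedral cone, and let 𝒫 and 𝒫' be finite collections of polyhedra in ℝ^n. Suppose that for every P ∈ 𝒫 and every face τ of σ₀, either τ ⊆ ρ(P) or relint(τ) ∩ ρ(P) = ∅. Then, taking closures in N_ℝ(σ₀) and writing |𝒫| = ⋃_{P∈𝒫} P, one has closure(ι(|𝒫| ∩ |𝒫'|)) = closure(ι(|𝒫|)) ∩ closure(ι(|𝒫'|)). -/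
open Set Pointwise

/-- A set is pointed if it contains no nonzero linear subspace. -/
def IsPointedSet {V : Type*} [AddCommGroup V] [Module ℝ V] (σ : Set V) : Prop :=
  ∀ W : Submodule ℝ V, (W : Set V) ⊆ σ → W = ⊥

/-- `F` is a face of the polyhedral cone `σ`. -/
def IsFaceOfCone {V : Type*} [AddCommGroup V] [Module ℝ V] (σ F : Set V) : Prop :=
  ∃ u : V →ₗ[ℝ] ℝ, (∀ x ∈ σ, u x ≤ 0) ∧ F = {x ∈ σ | u x = 0}

/-- The dual cone `σ^∨ = {u : ⟨u, v⟩ ≤ 0 for all v ∈ σ}` inside the dual space. -/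
def dualCone {n : ℕ} (σ : Set (Fin n → ℝ)) : Set ((Fin n → ℝ) →ₗ[ℝ] ℝ) :=
  {u | ∀ v ∈ σ, u v ≤ 0}

/-- The canonical map `ι : ℝⁿ → (σ₀^∨ → ℝ ∪ {-∞})`, `ι(v)(u) = ⟨u, v⟩`; the target carries
the topology of pointwise convergence. -/
def iotaTrop {n : ℕ} (σ₀ : Set (Fin n → ℝ)) (v : Fin n → ℝ) :
    ↥(dualCone σ₀) → EReal :=
  fun u => ((u.1 v : ℝ) : EReal)

/-- The extended tropicalization `N_ℝ(σ₀)`: the set of monoid homomorphisms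
`h : σ₀^∨ → ℝ ∪ {-∞}` with `h(0) = 0`, `h(u + u') = h(u) + h(u')` and `h(r • u) = r·h(u)`
for `r > 0`, realized as the `EReal`-valued functions on `σ₀^∨` never taking the value `+∞`. -/
def NRext {n : ℕ} (σ₀ : Set (Fin n → ℝ)) : Set (↥(dualCone σ₀) → EReal) :=
  {h | (∀ u, h u ≠ ⊤) ∧
       (∀ u : ↥(dualCone σ₀), (u : (Fin n → ℝ) →ₗ[ℝ] ℝ) = 0 → h u = 0) ∧
       (∀ u u' s : ↥(dualCone σ₀),
         (s : (Fin n → ℝ) →ₗ[ℝ] ℝ) = (u : (Fin n → ℝ) →ₗ[ℝ] ℝ) + (u' : (Fin n → ℝ) →ₗ[ℝ] ℝ) →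
           h s = h u + h u') ∧
       (∀ r : ℝ, 0 < r → ∀ u s : ↥(dualCone σ₀),
         (s : (Fin n → ℝ) →ₗ[ℝ] ℝ) = r • (u : (Fin n → ℝ) →ₗ[ℝ] ℝ) →
           h s = (r : EReal) * h u)}


/-!
Write `σ₀ = {x | ∀ j, ⟨u j, x⟩ ≤ 0}`. By Farkas' lemma the `u j` generate `σ₀^∨`, so a point `h`
of `N_ℝ(σ₀)` is determined by its values on them (`h w = ∑ a j * h (u j)` if `w = ∑ a j • u j`),
and convergence to `h` can be tested on the `u j`. If `h` lies in the closure of `ι(Q)` for a polyhedron `Q`, linear programming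
duality (again Farkas) yields `x ∈ Q` with `⟨u j, x⟩ = h (u j)` wherever `h (u j)` is finite, and a
recession direction `w` of `Q` with `⟨u j, w⟩ = 0` there and `⟨u j, w⟩ < 0` where `h (u j) = -∞`;
then `ι(x + s • w) → h` as `s → ∞`.

For `h` in the closures of `ι(P)` and `ι(P')`, the direction `w` obtained for `P` lies in `ρ(P)`
and in the relative interior of the face `τ` of `σ₀` on which the `u j` with `h (u j)` finite
vanish, so compatibility forces `τ ⊆ ρ(P)`. With `x, w` obtained for `P'` and `x₀ ∈ P` the
corresponding point for `P`, `x + s • w - x₀ ∈ τ` for large `s`, so `x + s • w ∈ P ∩ P'`, and these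
points converge to `h`.
-/

open Set Finset Filter Topology

section Farkas

variable {𝕜 V ι : Type*} [Field 𝕜] [LinearOrder 𝕜] [IsStrictOrderedRing 𝕜]
  [AddCommGroup V] [Module 𝕜 V]

theorem exists_eq_sum_nonneg_smul (s : Finset ι) (f : ι → V →ₗ[𝕜] 𝕜) (g : V →ₗ[𝕜] 𝕜)
    (hg : ∀ x, (∀ i ∈ s, f i x ≤ 0) → g x ≤ 0) :
    ∃ a : ι → 𝕜, (∀ i, 0 ≤ a i) ∧ g = ∑ i ∈ s, a i • f i := by
  classical
  induction s using Finset.induction_on generalizing f g with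
  | empty =>
    refine ⟨0, fun _ => le_rfl, LinearMap.ext fun x => le_antisymm (hg x (by simp)) ?_⟩
    simpa using hg (-x) (by simp)
  | insert k s hks ih =>
    by_cases hs : ∀ x, (∀ i ∈ s, f i x ≤ 0) → g x ≤ 0
    · obtain ⟨a, ha, rfl⟩ := ih f g hs
      refine ⟨Function.update a k 0, fun i => ?_, ?_⟩
      · rcases eq_or_ne i k with rfl | hik <;> simp [*]
      · rw [sum_insert hks, Function.update_self, zero_smul, zero_add]
        exact sum_congr rfl fun i hi => by rw [Function.update_of_ne (ne_of_mem_of_not_mem hi hks)]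
    push Not at hs
    obtain ⟨x₀, hx₀, hgx₀⟩ := hs
    have hkx₀ : 0 < f k x₀ := by
      by_contra! hk
      exact (hg x₀ (forall_mem_insert _ _ _ |>.2 ⟨hk, hx₀⟩)).not_gt hgx₀
    -- Bartl's reduction: restrict everything to `ker (f k)` by projecting along `x₀`.
    let π : (V →ₗ[𝕜] 𝕜) → (V →ₗ[𝕜] 𝕜) := fun φ => φ - (φ x₀ / f k x₀) • f k
    have hπ : ∀ φ x, π φ x = φ (x - (f k x / f k x₀) • x₀) := fun φ x => by
      simp only [π, LinearMap.sub_apply, LinearMap.smul_apply, smul_eq_mul, map_sub, map_smul]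
      ring
    obtain ⟨a, ha, hga⟩ := ih (fun i => π (f i)) (π g) fun x hx => by
      rw [hπ]
      refine hg _ (forall_mem_insert _ _ _ |>.2 ⟨le_of_eq ?_, fun i hi => hπ (f i) x ▸ hx i hi⟩)
      rw [map_sub, map_smul, smul_eq_mul, div_mul_cancel₀ _ hkx₀.ne', sub_self]
    refine ⟨Function.update a k ((g x₀ - ∑ i ∈ s, a i * f i x₀) / f k x₀), fun i => ?_, ?_⟩
    · rcases eq_or_ne i k with rfl | hik
      · rw [Function.update_self]
        have : ∑ i ∈ s, a i * f i x₀ ≤ 0 :=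
          sum_nonpos fun i hi => mul_nonpos_of_nonneg_of_nonpos (ha i) (hx₀ i hi)
        exact div_nonneg (by linarith) hkx₀.le
      · rw [Function.update_of_ne hik]; exact ha i
    · set c := (g x₀ - ∑ i ∈ s, a i * f i x₀) / f k x₀
      have hupd : ∑ i ∈ s, Function.update a k c i • f i = ∑ i ∈ s, a i • f i :=
        sum_congr rfl fun i hi => by rw [Function.update_of_ne (ne_of_mem_of_not_mem hi hks)]
      rw [sum_insert hks, Function.update_self, hupd]
      ext x
      have hx := LinearMap.congr_fun hga x
      simp only [π, LinearMap.sub_apply, LinearMap.smul_apply, LinearMap.sum_apply, smul_eq_mul,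
        mul_sub, sum_sub_distrib] at hx
      have hsum : ∑ i ∈ s, a i * (f i x₀ / f k x₀ * f k x) =
          (∑ i ∈ s, a i * f i x₀) / f k x₀ * f k x := by
        rw [sum_div, sum_mul]; exact sum_congr rfl fun i _ => by ring
      simp only [LinearMap.add_apply, LinearMap.smul_apply, LinearMap.sum_apply, smul_eq_mul, c]
      rw [hsum] at hx
      rw [sub_div, sub_mul]
      linarith

theorem exists_forall_le_of_approx (s : Finset ι) (f : ι → V →ₗ[𝕜] 𝕜) (c : ι → 𝕜)
    (happrox : ∀ ε > 0, ∃ x, ∀ i ∈ s, f i x ≤ c i + ε) : ∃ x, ∀ i ∈ s, f i x ≤ c i := by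
  by_contra! hinf
  -- Homogenize: on `V × 𝕜` the system `f i x ≤ r * c i`, `0 ≤ r` forces `r ≤ 0`.
  let F : Option ι → V × 𝕜 →ₗ[𝕜] 𝕜 := fun o => o.elim (-LinearMap.snd 𝕜 V 𝕜)
    fun i => (f i).comp (LinearMap.fst 𝕜 V 𝕜) - c i • LinearMap.snd 𝕜 V 𝕜
  obtain ⟨a, ha, hsnd⟩ := exists_eq_sum_nonneg_smul s.insertNone F (LinearMap.snd 𝕜 V 𝕜) <| by
    rintro ⟨x, r⟩ hxr
    by_contra! hr
    obtain ⟨i, hi, hlt⟩ := hinf (r⁻¹ • x)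
    have hi' := hxr (some i) (Finset.mem_insertNone.2 fun _ h => Option.some_injective _ h ▸ hi)
    simp only [F, Option.elim, LinearMap.sub_apply, LinearMap.comp_apply, LinearMap.fst_apply,
      LinearMap.smul_apply, LinearMap.snd_apply, smul_eq_mul, sub_nonpos] at hi'
    rw [LinearMap.snd_apply] at hr
    rw [map_smul, smul_eq_mul, lt_inv_mul_iff₀ hr] at hlt
    linarith
  set S := ∑ i ∈ s, a (some i)
  have hS : 0 ≤ S := sum_nonneg fun i _ => ha _
  obtain ⟨x, hx⟩ := happrox (1 / (S + 1)) (by positivity)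
  have h1 := LinearMap.congr_fun hsnd (x, 1)
  simp only [sum_insertNone, F, Option.elim, LinearMap.add_apply, LinearMap.smul_apply,
    LinearMap.sum_apply, LinearMap.neg_apply, LinearMap.sub_apply, LinearMap.comp_apply,
    LinearMap.fst_apply, LinearMap.snd_apply, smul_eq_mul, mul_one] at h1
  have h2 : ∑ i ∈ s, a (some i) * (f i x - c i) ≤ S * (1 / (S + 1)) := by
    rw [sum_mul]
    exact sum_le_sum fun i hi => mul_le_mul_of_nonneg_left (by linarith [hx i hi]) (ha _)
  have h3 : S * (1 / (S + 1)) < 1 := by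
    rw [mul_one_div, div_lt_one (by linarith)]; linarith
  linarith [ha none]

theorem exists_recession_neg_of_unbounded (s : Finset ι) (f : ι → V →ₗ[𝕜] 𝕜) (c : ι → 𝕜)
    (g : V →ₗ[𝕜] 𝕜) (hunb : ∀ K, ∃ x, (∀ i ∈ s, f i x ≤ c i) ∧ g x < K) :
    ∃ w, (∀ i ∈ s, f i w ≤ 0) ∧ g w < 0 := by
  by_contra! h
  obtain ⟨a, ha, hga⟩ := exists_eq_sum_nonneg_smul s f (-g) fun w hw => by simpa using h w hw
  obtain ⟨x, hx, hgx⟩ := hunb (-∑ i ∈ s, a i * c i)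
  have : -g x ≤ ∑ i ∈ s, a i * c i := by
    rw [← LinearMap.neg_apply, hga, LinearMap.sum_apply]
    exact sum_le_sum fun i hi => mul_le_mul_of_nonneg_left (hx i hi) (ha i)
  linarith

end Farkas

theorem mem_intrinsicInterior_of_isOpen {E : Type*} [AddCommGroup E] [Module ℝ E]
    [TopologicalSpace E] {s U : Set E} {x : E} (A : Submodule ℝ E) (hsA : s ⊆ A)
    (hU : IsOpen U) (hUA : U ∩ A ⊆ s) (hxU : x ∈ U) (hxs : x ∈ s) :
    x ∈ intrinsicInterior ℝ s := by
  have hspan : (affineSpan ℝ s : Set E) ⊆ A :=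
    affineSpan_le (Q := A.toAffineSubspace).2 hsA
  exact mem_intrinsicInterior.2 ⟨⟨x, subset_affineSpan ℝ s hxs⟩,
    interior_maximal (t := ((↑) ⁻¹' U : Set (affineSpan ℝ s)))
      (fun y hy => hUA ⟨hy, hspan y.2⟩) (hU.preimage continuous_subtype_val) hxU,
    rfl⟩

theorem tendsto_apply_add_smul_atBot {V : Type*} [AddCommGroup V] [Module ℝ V] (φ : V →ₗ[ℝ] ℝ)
    (x : V) {w : V} (hw : φ w < 0) : Tendsto (fun s : ℝ => φ (x + s • w)) atTop atBot := by
  simp only [map_add, map_smul, smul_eq_mul]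
  exact tendsto_atBot_add_const_left _ _ (tendsto_id.atTop_mul_const_of_neg hw)

theorem mem_recCone_iInter {V β : Type*} [AddCommGroup V] [Module ℝ V] (q : β → V →ₗ[ℝ] ℝ)
    (c : β → ℝ) {w : V} (hw : ∀ b, q b w ≤ 0) : w ∈ recCone (⋂ b, {x | q b x ≤ c b}) := by
  intro x hx
  simp only [mem_iInter, mem_ofPred_eq, map_add] at hx ⊢
  exact fun b => by linarith [hx b, hw b]

def coneFace {V ι : Type*} [AddCommGroup V] [Module ℝ V] (u : ι → V →ₗ[ℝ] ℝ) (F : Finset ι) :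
    Set V :=
  {x | (∀ j, u j x ≤ 0) ∧ ∀ j ∈ F, u j x = 0}

section ConeFace

variable {V ι : Type*} [AddCommGroup V] [Module ℝ V] (u : ι → V →ₗ[ℝ] ℝ) (F : Finset ι)

theorem isFaceOfCone_coneFace : IsFaceOfCone (⋂ j, {x | u j x ≤ 0}) (coneFace u F) := by
  refine ⟨∑ j ∈ F, u j, fun x hx => ?_, ?_⟩
  · rw [LinearMap.sum_apply]
    exact sum_nonpos fun j _ => mem_iInter.1 hx j
  · ext x
    simp only [coneFace, mem_iInter, mem_ofPred_eq, LinearMap.sum_apply, and_congr_right_iff]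
    exact fun hx => (sum_eq_zero_iff_of_nonpos fun j _ => hx j).symm

theorem eventually_add_smul_mem_coneFace [Finite ι] {z w : V} (hz : ∀ j ∈ F, u j z = 0)
    (hwF : ∀ j ∈ F, u j w = 0) (hwFc : ∀ j ∉ F, u j w < 0) :
    ∀ᶠ s : ℝ in atTop, z + s • w ∈ coneFace u F := by
  have hj : ∀ j, ∀ᶠ s : ℝ in atTop, u j (z + s • w) ≤ 0 ∧ (j ∈ F → u j (z + s • w) = 0) := by
    intro j
    by_cases hj : j ∈ F
    · have h0 : ∀ s : ℝ, u j (z + s • w) = 0 := fun s => by simp [hz j hj, hwF j hj]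
      exact Eventually.of_forall fun s => ⟨(h0 s).le, fun _ => h0 s⟩
    · filter_upwards [(tendsto_apply_add_smul_atBot (u j) z (hwFc j hj)).eventually
        (eventually_le_atBot 0)] with s hs
      exact ⟨hs, fun h => absurd h hj⟩
  filter_upwards [eventually_all.2 hj] with s hs
  exact ⟨fun j => (hs j).1, fun j hjF => (hs j).2 hjF⟩

end ConeFace

section ConeFaceRelint

variable {E ι : Type*} [NormedAddCommGroup E] [NormedSpace ℝ E] [FiniteDimensional ℝ E]
  [Finite ι] (u : ι → E →ₗ[ℝ] ℝ) (F : Finset ι)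

theorem mem_intrinsicInterior_coneFace {w : E} (hwF : ∀ j ∈ F, u j w = 0)
    (hwFc : ∀ j ∉ F, u j w < 0) : w ∈ intrinsicInterior ℝ (coneFace u F) := by
  refine mem_intrinsicInterior_of_isOpen (⨅ j ∈ F, LinearMap.ker (u j))
    (U := {x | ∀ j ∉ F, u j x < 0}) ?_ ?_ ?_ hwFc ⟨fun j => ?_, hwF⟩
  · exact fun x hx => by
      simpa only [SetLike.mem_coe, Submodule.mem_iInf, LinearMap.mem_ker] using hx.2
  · simp only [ofPred_forall]
    exact isOpen_iInter_of_finite fun j => isOpen_iInter_of_finite fun _ =>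
      isOpen_lt (u j).continuous_of_finiteDimensional continuous_const
  · rintro x ⟨hxU, hxA⟩
    simp only [SetLike.mem_coe, Submodule.mem_iInf, LinearMap.mem_ker] at hxA
    refine ⟨fun j => ?_, hxA⟩
    by_cases hj : j ∈ F
    exacts [(hxA j hj).le, (hxU j hj).le]
  · by_cases hj : j ∈ F
    exacts [(hwF j hj).le, (hwFc j hj).le]

theorem coneFace_subset_recCone {σ P : Set E} (hσ : σ = ⋂ j, {x | u j x ≤ 0})
    (hcompat : ∀ τ : Set E, IsFaceOfCone σ τ →
      τ ⊆ recCone P ∨ intrinsicInterior ℝ τ ∩ recCone P = ∅)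
    {w : E} (hwP : w ∈ recCone P) (hwF : ∀ j ∈ F, u j w = 0) (hwFc : ∀ j ∉ F, u j w < 0) :
    coneFace u F ⊆ recCone P :=
  (hcompat _ (hσ ▸ isFaceOfCone_coneFace u F)).resolve_right <|
    nonempty_iff_ne_empty.1 ⟨w, mem_intrinsicInterior_coneFace u F hwF hwFc, hwP⟩

end ConeFaceRelint

theorem EReal.tendsto_finset_sum {α ι : Type*} {l : Filter α} {f : ι → α → EReal}
    {g : ι → EReal} (s : Finset ι) (hg : ∀ i ∈ s, g i ≠ ⊤)
    (hf : ∀ i ∈ s, Tendsto (f i) l (𝓝 (g i))) :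
    Tendsto (fun x => ∑ i ∈ s, f i x) l (𝓝 (∑ i ∈ s, g i)) := by
  classical
  induction s using Finset.induction_on with
  | empty => simpa using tendsto_const_nhds
  | insert k s hks ih =>
    simp only [sum_insert hks]
    have hs : ∑ i ∈ s, g i ≠ ⊤ := sum_induction g (· ≠ ⊤) (fun _ _ => EReal.add_ne_top)
      EReal.zero_ne_top fun i hi => hg i (mem_insert_of_mem hi)
    exact (EReal.continuousAt_add (Or.inl (hg k (mem_insert_self k s))) (Or.inr hs)).tendsto.comp
      ((hf k (mem_insert_self k s)).prodMk_nhds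
        (ih (fun i hi => hg i (mem_insert_of_mem hi)) fun i hi => hf i (mem_insert_of_mem hi)))

section Tropical

variable {n : ℕ} {σ₀ : Set (Fin n → ℝ)}

theorem sum_smul_mem_dualCone {ι : Type*} (s : Finset ι) (a : ι → ℝ) (ha : ∀ i, 0 ≤ a i)
    (v : ι → dualCone σ₀) : ∑ i ∈ s, a i • (v i : (Fin n → ℝ) →ₗ[ℝ] ℝ) ∈ dualCone σ₀ := by
  intro x hx
  rw [LinearMap.sum_apply]
  exact sum_nonpos fun i _ => mul_nonpos_of_nonneg_of_nonpos (ha i) ((v i).2 x hx)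

theorem iotaTrop_mem_NRext (x : Fin n → ℝ) : iotaTrop σ₀ x ∈ NRext σ₀ :=
  ⟨fun _ => EReal.coe_ne_top _, fun u hu => by simp [iotaTrop, hu],
    fun u u' s hs => by simp [iotaTrop, hs], fun r _ u s hs => by simp [iotaTrop, hs]⟩

theorem apply_eq_sum_of_mem_NRext {h : dualCone σ₀ → EReal} (hN : h ∈ NRext σ₀) {ι : Type*}
    (v : ι → dualCone σ₀) (a : ι → ℝ) (ha : ∀ i, 0 ≤ a i) (s : Finset ι) (w : dualCone σ₀)
    (hw : (w : (Fin n → ℝ) →ₗ[ℝ] ℝ) = ∑ i ∈ s, a i • (v i : (Fin n → ℝ) →ₗ[ℝ] ℝ)) :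
    h w = ∑ i ∈ s, (a i : EReal) * h (v i) := by
  classical
  obtain ⟨-, hzero, hadd, hsmul⟩ := hN
  induction s using Finset.induction_on generalizing w with
  | empty => exact hzero w (by simpa using hw)
  | insert k s hks ih =>
    rw [sum_insert hks] at hw ⊢
    let w₁ : dualCone σ₀ := ⟨a k • (v k : (Fin n → ℝ) →ₗ[ℝ] ℝ), by
      simpa using sum_smul_mem_dualCone {k} a ha v⟩
    let w₂ : dualCone σ₀ := ⟨_, sum_smul_mem_dualCone s a ha v⟩
    rw [hadd w₁ w₂ w hw, ih w₂ rfl]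
    congr 1
    rcases (ha k).eq_or_lt with hk | hk
    · rw [← hk, EReal.coe_zero, zero_mul]
      exact hzero w₁ (by simp [w₁, ← hk])
    · exact hsmul _ hk (v k) w₁ rfl

theorem tendsto_nhds_of_tendsto_generators {ι α : Type*} [Fintype ι] (v : ι → dualCone σ₀)
    (hv : ∀ w : dualCone σ₀, ∃ a : ι → ℝ, (∀ i, 0 ≤ a i) ∧
      (w : (Fin n → ℝ) →ₗ[ℝ] ℝ) = ∑ i, a i • (v i : (Fin n → ℝ) →ₗ[ℝ] ℝ))
    {h : dualCone σ₀ → EReal} (hN : h ∈ NRext σ₀) {l : Filter α} {φ : α → dualCone σ₀ → EReal}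
    (hφ : ∀ x, φ x ∈ NRext σ₀) (hlim : ∀ i, Tendsto (fun x => φ x (v i)) l (𝓝 (h (v i)))) :
    Tendsto φ l (𝓝 h) := by
  refine tendsto_pi_nhds.2 fun w => ?_
  obtain ⟨a, ha, hw⟩ := hv w
  have hsum : ∀ g ∈ NRext σ₀, g w = ∑ i, (a i : EReal) * g (v i) :=
    fun g hg => apply_eq_sum_of_mem_NRext hg v a ha univ w hw
  simp only [hsum _ (hφ _), hsum h hN]
  refine EReal.tendsto_finset_sum _ (fun i _ => ?_) fun i _ =>
    EReal.Tendsto.const_mul (hlim i) (Or.inl (EReal.coe_ne_bot _)) (Or.inl (EReal.coe_ne_top _))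
  exact (EReal.mul_ne_top _ _).2 ⟨Or.inl (EReal.coe_ne_bot _), Or.inl (EReal.coe_nonneg.2 (ha i)),
    Or.inl (EReal.coe_ne_top _), Or.inr (hN.1 _)⟩

theorem exists_mem_near_of_mem_closure {ι : Type*} [Finite ι] {Q : Set (Fin n → ℝ)}
    {h : dualCone σ₀ → EReal} (hcl : h ∈ closure (iotaTrop σ₀ '' Q)) (v : ι → dualCone σ₀)
    (htop : ∀ i, h (v i) ≠ ⊤) {ε : ℝ} (hε : 0 < ε) (K : ℝ) :
    ∃ x ∈ Q, ∀ i, (h (v i) = ⊥ → (v i : (Fin n → ℝ) →ₗ[ℝ] ℝ) x < K) ∧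
      (h (v i) ≠ ⊥ → |(v i : (Fin n → ℝ) →ₗ[ℝ] ℝ) x - (h (v i)).toReal| < ε) := by
  have hnear : ∀ᶠ g in 𝓝 h, ∀ i, (h (v i) = ⊥ → g (v i) < (K : EReal)) ∧ (h (v i) ≠ ⊥ →
      g (v i) ∈ Ioo (((h (v i)).toReal - ε : ℝ) : EReal) ((h (v i)).toReal + ε : ℝ)) := by
    refine eventually_all.2 fun i => ?_
    have hcont := (continuous_apply (v i)).continuousAt (x := h)
    by_cases hb : h (v i) = ⊥
    · filter_upwards [hcont.eventually (Iio_mem_nhds (hb ▸ EReal.bot_lt_coe K))] with g hg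
      exact ⟨fun _ => hg, fun h' => absurd hb h'⟩
    · have hr := EReal.coe_toReal (htop i) hb
      have hIoo : Ioo (((h (v i)).toReal - ε : ℝ) : EReal) ((h (v i)).toReal + ε : ℝ) ∈
          𝓝 (((h (v i)).toReal : ℝ) : EReal) :=
        Ioo_mem_nhds (EReal.coe_lt_coe_iff.2 (by linarith)) (EReal.coe_lt_coe_iff.2 (by linarith))
      rw [hr] at hIoo
      filter_upwards [hcont.eventually hIoo] with g hg
      exact ⟨fun h' => absurd h' hb, fun _ => hg⟩
  obtain ⟨_, ⟨x, hxQ, rfl⟩, hx⟩ := ((mem_closure_iff_frequently.1 hcl).and_eventually hnear).exists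
  refine ⟨x, hxQ, fun i => ⟨fun hb => EReal.coe_lt_coe_iff.1 ((hx i).1 hb), fun hb => ?_⟩⟩
  obtain ⟨h₁, h₂⟩ := (hx i).2 hb
  rw [abs_sub_lt_iff]
  constructor <;> linarith [EReal.coe_lt_coe_iff.1 h₁, EReal.coe_lt_coe_iff.1 h₂]

theorem exists_mem_apply_eq_of_mem_closure {β ι : Type*} [Fintype β] [Fintype ι]
    (q : β → (Fin n → ℝ) →ₗ[ℝ] ℝ) (c : β → ℝ) {h : dualCone σ₀ → EReal}
    (hcl : h ∈ closure (iotaTrop σ₀ '' ⋂ b, {x | q b x ≤ c b})) (v : ι → dualCone σ₀)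
    (htop : ∀ i, h (v i) ≠ ⊤) :
    ∃ x ∈ ⋂ b, {x | q b x ≤ c b},
      ∀ i, h (v i) ≠ ⊥ → (v i : (Fin n → ℝ) →ₗ[ℝ] ℝ) x = (h (v i)).toReal := by
  classical
  let g : ι → (Fin n → ℝ) →ₗ[ℝ] ℝ := fun i => v i
  let t : ι → ℝ := fun i => (h (v i)).toReal
  let E := univ.filter fun i => h (v i) ≠ ⊥
  -- The system `x ∈ Q`, `g i x = t i` for `i ∈ E` is solvable up to any `ε > 0`.
  obtain ⟨x, hx⟩ := exists_forall_le_of_approx (univ.disjSum (E.disjSum E))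
      (Sum.elim q (Sum.elim g (-g))) (Sum.elim c (Sum.elim t (-t))) fun ε hε => by
    obtain ⟨x, hxQ, hx⟩ := exists_mem_near_of_mem_closure hcl v htop hε 0
    simp only [mem_iInter, mem_ofPred_eq] at hxQ
    refine ⟨x, ?_⟩
    simp only [Sum.forall, inl_mem_disjSum, inr_mem_disjSum, Sum.elim_inl, Sum.elim_inr, E,
      mem_filter, Finset.mem_univ, true_and, forall_const, Pi.neg_apply, LinearMap.neg_apply]
    refine ⟨fun b => by linarith [hxQ b], fun i hi => ?_, fun i hi => ?_⟩ <;>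
      linarith [abs_sub_lt_iff.1 ((hx i).2 hi)]
  simp only [Sum.forall, inl_mem_disjSum, inr_mem_disjSum, Sum.elim_inl, Sum.elim_inr, E,
    mem_filter, Finset.mem_univ, true_and, forall_const, Pi.neg_apply, LinearMap.neg_apply,
    neg_le_neg_iff] at hx
  exact ⟨x, mem_iInter.2 hx.1, fun i hi => le_antisymm (hx.2.1 i hi) (hx.2.2 i hi)⟩

theorem exists_recession_neg_apply_of_mem_closure {β ι : Type*} [Fintype β] [Fintype ι]
    (q : β → (Fin n → ℝ) →ₗ[ℝ] ℝ) (c : β → ℝ) {h : dualCone σ₀ → EReal}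
    (hcl : h ∈ closure (iotaTrop σ₀ '' ⋂ b, {x | q b x ≤ c b})) (v : ι → dualCone σ₀)
    (htop : ∀ i, h (v i) ≠ ⊤) {k : ι} (hk : h (v k) = ⊥) :
    ∃ w, ((∀ b, q b w ≤ 0) ∧ (∀ i, (v i : (Fin n → ℝ) →ₗ[ℝ] ℝ) w ≤ 0) ∧
      ∀ i, h (v i) ≠ ⊥ → (v i : (Fin n → ℝ) →ₗ[ℝ] ℝ) w = 0) ∧
      (v k : (Fin n → ℝ) →ₗ[ℝ] ℝ) w < 0 := by
  classical
  let g : ι → (Fin n → ℝ) →ₗ[ℝ] ℝ := fun i => v i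
  -- `t i = 0` when `h (v i) = ⊥`, so that row of `g ≤ t + 1` merely bounds `g i` above.
  let t : ι → ℝ := fun i => (h (v i)).toReal
  let E := univ.filter fun i => h (v i) ≠ ⊥
  -- `g k` is unbounded below on the polyhedron `Q ∩ {g ≤ t + 1} ∩ {g ≥ t - 1 on E}`.
  obtain ⟨w, hw, hkw⟩ := exists_recession_neg_of_unbounded (univ.disjSum (univ.disjSum E))
      (Sum.elim q (Sum.elim g (-g))) (fun r => Sum.elim c (Sum.elim t (-t)) r + 1) (g k)
      fun K => by
    obtain ⟨x, hxQ, hx⟩ := exists_mem_near_of_mem_closure hcl v htop one_pos (min K 0)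
    simp only [mem_iInter, mem_ofPred_eq] at hxQ
    refine ⟨x, ?_, ((hx k).1 hk).trans_le (min_le_left _ _)⟩
    simp only [Sum.forall, inl_mem_disjSum, inr_mem_disjSum, Sum.elim_inl, Sum.elim_inr, E,
      mem_filter, Finset.mem_univ, true_and, forall_const, Pi.neg_apply, LinearMap.neg_apply]
    refine ⟨fun b => by linarith [hxQ b], fun i => ?_,
      fun i hi => by linarith [abs_sub_lt_iff.1 ((hx i).2 hi)]⟩
    by_cases hi : h (v i) = ⊥
    · have hxi : g i x < 0 := ((hx i).1 hi).trans_le (min_le_right K 0)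
      simp only [t, hi, EReal.toReal_bot]
      linarith
    · linarith [abs_sub_lt_iff.1 ((hx i).2 hi)]
  simp only [Sum.forall, inl_mem_disjSum, inr_mem_disjSum, Sum.elim_inl, Sum.elim_inr, E,
    mem_filter, Finset.mem_univ, true_and, forall_const, Pi.neg_apply, LinearMap.neg_apply,
    neg_nonpos] at hw
  exact ⟨w, ⟨hw.1, hw.2.1, fun i hi => le_antisymm (hw.2.1 i) (hw.2.2 i hi)⟩, hkw⟩

theorem exists_recession_of_mem_closure {β ι : Type*} [Fintype β] [Fintype ι]
    (q : β → (Fin n → ℝ) →ₗ[ℝ] ℝ) (c : β → ℝ) {h : dualCone σ₀ → EReal}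
    (hcl : h ∈ closure (iotaTrop σ₀ '' ⋂ b, {x | q b x ≤ c b})) (v : ι → dualCone σ₀)
    (htop : ∀ i, h (v i) ≠ ⊤) :
    ∃ w, (∀ b, q b w ≤ 0) ∧ (∀ i, h (v i) ≠ ⊥ → (v i : (Fin n → ℝ) →ₗ[ℝ] ℝ) w = 0) ∧
      ∀ i, h (v i) = ⊥ → (v i : (Fin n → ℝ) →ₗ[ℝ] ℝ) w < 0 := by
  classical
  choose! W hW hWneg using fun k (hk : h (v k) = ⊥) =>
    exists_recession_neg_apply_of_mem_closure q c hcl v htop hk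
  let B := univ.filter fun i => h (v i) = ⊥
  have hB : ∀ {i}, i ∈ B ↔ h (v i) = ⊥ := by simp [B]
  refine ⟨∑ k ∈ B, W k, fun b => ?_, fun i hi => ?_, fun i hi => ?_⟩ <;> rw [map_sum]
  · exact sum_nonpos fun k hk => (hW k (hB.1 hk)).1 b
  · exact sum_eq_zero fun k hk => (hW k (hB.1 hk)).2.2 i hi
  · exact sum_neg' (fun k hk => (hW k (hB.1 hk)).2.1 i) ⟨i, hB.2 hi, hWneg i hi⟩

theorem tendsto_iotaTrop_add_smul {ι : Type*} [Fintype ι] (v : ι → dualCone σ₀)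
    (hv : ∀ w : dualCone σ₀, ∃ a : ι → ℝ, (∀ i, 0 ≤ a i) ∧
      (w : (Fin n → ℝ) →ₗ[ℝ] ℝ) = ∑ i, a i • (v i : (Fin n → ℝ) →ₗ[ℝ] ℝ))
    {h : dualCone σ₀ → EReal} (hN : h ∈ NRext σ₀) {x w : Fin n → ℝ}
    (hx : ∀ i, h (v i) ≠ ⊥ → (v i : (Fin n → ℝ) →ₗ[ℝ] ℝ) x = (h (v i)).toReal)
    (hwF : ∀ i, h (v i) ≠ ⊥ → (v i : (Fin n → ℝ) →ₗ[ℝ] ℝ) w = 0)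
    (hwB : ∀ i, h (v i) = ⊥ → (v i : (Fin n → ℝ) →ₗ[ℝ] ℝ) w < 0) :
    Tendsto (fun s : ℝ => iotaTrop σ₀ (x + s • w)) atTop (𝓝 h) := by
  refine tendsto_nhds_of_tendsto_generators v hv hN (fun _ => iotaTrop_mem_NRext _) fun i => ?_
  by_cases hi : h (v i) = ⊥
  · rw [hi]
    exact EReal.tendsto_coe_atBot.comp (tendsto_apply_add_smul_atBot _ x (hwB i hi))
  · have hconst : ∀ s : ℝ, iotaTrop σ₀ (x + s • w) (v i) = h (v i) := fun s => by
      change (((v i : (Fin n → ℝ) →ₗ[ℝ] ℝ) (x + s • w) : ℝ) : EReal) = _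
      rw [map_add, map_smul, hx i hi, hwF i hi, smul_zero, add_zero,
        EReal.coe_toReal (hN.1 _) hi]
    simp only [hconst, tendsto_const_nhds]

theorem mem_closure_image_inter {m : ℕ} (u : Fin m → (Fin n → ℝ) →ₗ[ℝ] ℝ)
    (hσ : σ₀ = ⋂ j, {x | u j x ≤ 0}) {h : dualCone σ₀ → EReal} (hN : h ∈ NRext σ₀)
    {P P' : Set (Fin n → ℝ)} (hP : IsPolyhedron P) (hP' : IsPolyhedron P')
    (hcompat : ∀ τ : Set (Fin n → ℝ), IsFaceOfCone σ₀ τ →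
      τ ⊆ recCone P ∨ intrinsicInterior ℝ τ ∩ recCone P = ∅)
    (hcl : h ∈ closure (iotaTrop σ₀ '' P)) (hcl' : h ∈ closure (iotaTrop σ₀ '' P')) :
    h ∈ closure (iotaTrop σ₀ '' (P ∩ P')) := by
  classical
  obtain ⟨_, q, c, rfl⟩ := hP
  obtain ⟨_, q', c', rfl⟩ := hP'
  let uD : Fin m → dualCone σ₀ := fun j => ⟨u j, fun x hx => by
    rw [hσ] at hx; exact mem_iInter.1 hx j⟩
  have htop : ∀ j, h (uD j) ≠ ⊤ := fun j => hN.1 _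
  let F := univ.filter fun j => h (uD j) ≠ ⊥
  have hF : ∀ {j}, j ∈ F → h (uD j) ≠ ⊥ := by simp [F]
  have hFc : ∀ {j}, j ∉ F → h (uD j) = ⊥ := by simp [F]
  obtain ⟨x₀, hx₀, hx₀F⟩ := exists_mem_apply_eq_of_mem_closure q c hcl uD htop
  obtain ⟨x₀', hx₀', hx₀'F⟩ := exists_mem_apply_eq_of_mem_closure q' c' hcl' uD htop
  obtain ⟨w, hwq, hwF, hwB⟩ := exists_recession_of_mem_closure q c hcl uD htop
  obtain ⟨w', hw'q, hw'F, hw'B⟩ := exists_recession_of_mem_closure q' c' hcl' uD htop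
  have hτ : coneFace u F ⊆ recCone (⋂ b, {x | q b x ≤ c b}) :=
    coneFace_subset_recCone u F hσ hcompat (mem_recCone_iInter q c hwq)
      (fun j hj => hwF j (hF hj)) fun j hj => hwB j (hFc hj)
  have hmem : ∀ᶠ s : ℝ in atTop,
      x₀' + s • w' ∈ (⋂ b, {x | q b x ≤ c b}) ∩ ⋂ b, {x | q' b x ≤ c' b} := by
    filter_upwards [eventually_add_smul_mem_coneFace u F (z := x₀' - x₀)
      (fun j hj => by rw [map_sub, hx₀'F j (hF hj), hx₀F j (hF hj), sub_self])
      (fun j hj => hw'F j (hF hj)) (fun j hj => hw'B j (hFc hj)),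
      eventually_ge_atTop 0] with s hs hs0
    refine ⟨by simpa only [← add_assoc, add_sub_cancel] using hτ hs x₀ hx₀,
      mem_recCone_iInter q' c' (fun b => ?_) x₀' hx₀'⟩
    rw [map_smul, smul_eq_mul]
    exact mul_nonpos_of_nonneg_of_nonpos hs0 (hw'q b)
  have hgen : ∀ w : dualCone σ₀, ∃ a : Fin m → ℝ, (∀ j, 0 ≤ a j) ∧
      (w : (Fin n → ℝ) →ₗ[ℝ] ℝ) = ∑ j, a j • u j := fun w =>
    exists_eq_sum_nonneg_smul univ u w fun x hx =>
      w.2 x (hσ ▸ mem_iInter.2 fun j => hx j (Finset.mem_univ j))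
  exact mem_closure_of_tendsto (tendsto_iotaTrop_add_smul uD hgen hN hx₀'F hw'F hw'B)
    (hmem.mono fun s hs => mem_image_of_mem _ hs)

end Tropical

theorem closure_inter_supports_general {n : ℕ} (σ₀ : Set (Fin n → ℝ)) (hσ₀ : IsPolyCone σ₀)
    (𝒞 𝒞' : Set (Set (Fin n → ℝ)))
    (h𝒞fin : 𝒞.Finite) (h𝒞'fin : 𝒞'.Finite)
    (h𝒞 : ∀ P ∈ 𝒞, IsPolyhedron P) (h𝒞' : ∀ P ∈ 𝒞', IsPolyhedron P)
    (hcompat : ∀ P ∈ 𝒞, ∀ τ : Set (Fin n → ℝ), IsFaceOfCone σ₀ τ →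
      τ ⊆ recCone P ∨ intrinsicInterior ℝ τ ∩ recCone P = ∅) :
    NRext σ₀ ∩ closure (iotaTrop σ₀ '' (⋃₀ 𝒞 ∩ ⋃₀ 𝒞')) =
      (NRext σ₀ ∩ closure (iotaTrop σ₀ '' ⋃₀ 𝒞)) ∩
        (NRext σ₀ ∩ closure (iotaTrop σ₀ '' ⋃₀ 𝒞')) := by
  obtain ⟨m, u, hσ⟩ := hσ₀
  have hunion : ∀ 𝒟 : Set (Set (Fin n → ℝ)), 𝒟.Finite →
      closure (iotaTrop σ₀ '' ⋃₀ 𝒟) = ⋃ P ∈ 𝒟, closure (iotaTrop σ₀ '' P) := fun 𝒟 h𝒟 => by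
    rw [sUnion_eq_biUnion, image_iUnion₂]
    exact h𝒟.closure_biUnion _
  refine Subset.antisymm (fun h ⟨hN, hcl⟩ => ⟨⟨hN, closure_mono (image_mono inter_subset_left) hcl⟩,
    ⟨hN, closure_mono (image_mono inter_subset_right) hcl⟩⟩) ?_
  rintro h ⟨⟨hN, hcl⟩, -, hcl'⟩
  rw [hunion 𝒞 h𝒞fin, mem_iUnion₂] at hcl
  rw [hunion 𝒞' h𝒞'fin, mem_iUnion₂] at hcl'
  obtain ⟨P, hP, hclP⟩ := hcl
  obtain ⟨P', hP', hclP'⟩ := hcl'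
  refine ⟨hN, closure_mono (image_mono (inter_subset_inter (subset_sUnion_of_mem hP)
    (subset_sUnion_of_mem hP'))) ?_⟩
  exact mem_closure_image_inter u hσ hN (h𝒞 P hP) (h𝒞' P' hP') (hcompat P hP) hclP hclP'

/-- Let `σ₀ ⊆ ℝⁿ` be a pointed polyhedral cone and `𝒞, 𝒞'` finite collections of polyhedra
in `ℝⁿ`.  If for every `P ∈ 𝒞` and every face `τ` of `σ₀` either `τ ⊆ ρ(P)` or
`relint(τ) ∩ ρ(P) = ∅`, then, taking closures in `N_ℝ(σ₀)` (i.e. intersecting ambient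
pointwise-convergence closures with `N_ℝ(σ₀)`), one has
`closure(ι(|𝒞| ∩ |𝒞'|)) = closure(ι(|𝒞|)) ∩ closure(ι(|𝒞'|))`. -/
theorem closure_inter_supports {n : ℕ} (σ₀ : Set (Fin n → ℝ)) (hσ₀ : IsPolyCone σ₀)
    (hpt : IsPointedSet σ₀) (𝒞 𝒞' : Set (Set (Fin n → ℝ)))
    (h𝒞fin : 𝒞.Finite) (h𝒞'fin : 𝒞'.Finite)
    (h𝒞 : ∀ P ∈ 𝒞, IsPolyhedron P) (h𝒞' : ∀ P ∈ 𝒞', IsPolyhedron P)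
    (hcompat : ∀ P ∈ 𝒞, ∀ τ : Set (Fin n → ℝ), IsFaceOfCone σ₀ τ →
      τ ⊆ recCone P ∨ intrinsicInterior ℝ τ ∩ recCone P = ∅) :
    NRext σ₀ ∩ closure (iotaTrop σ₀ '' (⋃₀ 𝒞 ∩ ⋃₀ 𝒞')) =
      (NRext σ₀ ∩ closure (iotaTrop σ₀ '' ⋃₀ 𝒞)) ∩
        (NRext σ₀ ∩ closure (iotaTrop σ₀ '' ⋃₀ 𝒞')) :=
  closure_inter_supports_general σ₀ hσ₀ 𝒞 𝒞' h𝒞fin h𝒞'fin h𝒞 h𝒞' hcompat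
end

section
/- Let V be a finite-dimensional real vector space, let P = ⋂_{i=1}^r {v ∈ V : ⟨u_i, v⟩ ≤ a_i} be a polyhedron, and for t ≥ 0 set P_t = ⋂_{i=1}^r {v ∈ V : ⟨u_i, v⟩ ≤ a_i + t}. If P' is a polyhedron in V with P ∩ P' = ∅, then there exists t > 0 such that P_t ∩ P' = ∅. -/
/-!
Writing `P' = {v | w j v ≤ c j}`, disjointness says that the combined finite system
`u i v ≤ a i, w j v ≤ c j` has no solution, and it suffices to show that an infeasible finite
system of linear inequalities stays infeasible after raising every right-hand side by some `t > 0`.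
This goes by induction on the dimension through Fourier–Motzkin elimination of one coordinate `x`:
keep the rows not involving `x`, and for each pair of rows whose `x`-coefficients have opposite
signs add the positive combination of the two that cancels `x`. The eliminated system is solvable
exactly when the original one is, and raising the original right-hand sides by `t` raises the
eliminated ones by at most `t` times a constant depending only on the coefficients.
-/

open Module

lemma Finite.exists_between_of_forall_le_s15 {α κ₁ κ₂ : Type*} [LinearOrder α] [Nonempty α]
    [Finite κ₁] [Finite κ₂] {L : κ₁ → α} {U : κ₂ → α} (h : ∀ q p, L q ≤ U p) :
    ∃ x, (∀ q, L q ≤ x) ∧ ∀ p, x ≤ U p := by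
  cases isEmpty_or_nonempty κ₁ with
  | inl _ =>
    obtain ⟨x, hx⟩ := Finite.exists_ge U
    exact ⟨x, isEmptyElim, hx⟩
  | inr _ =>
    obtain ⟨q₀, hq₀⟩ := Finite.exists_max L
    exact ⟨L q₀, hq₀, h q₀⟩

section

variable {𝕜 : Type*} [Field 𝕜]

namespace FourierMotzkin

variable {ι W : Type*} [AddCommGroup W] [Module 𝕜 W] (f : ι → (𝕜 × W) →ₗ[𝕜] 𝕜)

def coeff (i : ι) : 𝕜 := f i (1, 0)

def restrict (i : ι) : W →ₗ[𝕜] 𝕜 := f i ∘ₗ LinearMap.inr 𝕜 𝕜 W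

lemma apply_eq_mul_coeff_add (i : ι) (x : 𝕜) (w : W) :
    f i (x, w) = x * coeff f i + restrict f i w := by
  have : ((x, w) : 𝕜 × W) = x • (1, 0) + (0, w) := by simp
  rw [this, map_add, map_smul, smul_eq_mul]
  rfl

end FourierMotzkin

variable [LinearOrder 𝕜]

def IsInfeasible {ι V : Type*} [AddCommGroup V] [Module 𝕜 V] (f : ι → V →ₗ[𝕜] 𝕜)
    (b : ι → 𝕜) : Prop :=
  ∀ v, ∃ i, b i < f i v

lemma isInfeasible_comp_linearEquiv_iff {ι V W : Type*} [AddCommGroup V] [Module 𝕜 V]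
    [AddCommGroup W] [Module 𝕜 W] {f : ι → V →ₗ[𝕜] 𝕜} {b : ι → 𝕜} (e : W ≃ₗ[𝕜] V) :
    IsInfeasible (fun i => f i ∘ₗ e.toLinearMap) b ↔ IsInfeasible f b :=
  ⟨fun h v => by simpa using h (e.symm v), fun h w => h (e w)⟩

namespace FourierMotzkin

variable {ι W : Type*} [AddCommGroup W] [Module 𝕜 W] (f : ι → (𝕜 × W) →ₗ[𝕜] 𝕜) (b : ι → 𝕜)

abbrev Index := {i // coeff f i = 0} ⊕ {i // 0 < coeff f i} × {j // coeff f j < 0}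

def rows : Index f → W →ₗ[𝕜] 𝕜
  | .inl i => restrict f i
  | .inr (p, q) => coeff f p • restrict f q - coeff f q • restrict f p

def bounds : Index f → 𝕜
  | .inl i => b i
  | .inr (p, q) => coeff f p * b q - coeff f q * b p

variable [IsStrictOrderedRing 𝕜] {f b}

theorem exists_extension [Finite ι] {w : W} (hw : ∀ k, rows f k w ≤ bounds f b k) :
    ∃ x, ∀ i, f i (x, w) ≤ b i := by
  obtain ⟨x, hlower, hupper⟩ := Finite.exists_between_of_forall_le_s15
    (L := fun q : {j // coeff f j < 0} => (b q - restrict f q w) / coeff f q)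
    (U := fun p : {i // 0 < coeff f i} => (b p - restrict f p w) / coeff f p)
    fun q p => by
      have hpq := hw (.inr (p, q))
      simp only [rows, bounds, LinearMap.sub_apply, LinearMap.smul_apply, smul_eq_mul] at hpq
      rw [div_le_iff_of_neg q.2, div_mul_eq_mul_div, div_le_iff₀ p.2]
      nlinarith [q.2, p.2]
  refine ⟨x, fun i => ?_⟩
  rw [apply_eq_mul_coeff_add]
  rcases lt_trichotomy (coeff f i) 0 with hi | hi | hi
  · have := (div_le_iff_of_neg hi).1 (hlower ⟨i, hi⟩)
    linarith
  · simpa [hi, rows, bounds] using hw (.inl ⟨i, hi⟩)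
  · have := (le_div_iff₀ hi).1 (hupper ⟨i, hi⟩)
    linarith

theorem isInfeasible_rows [Finite ι] (h : IsInfeasible f b) :
    IsInfeasible (rows f) (bounds f b) := by
  intro w
  by_contra! hw
  obtain ⟨x, hx⟩ := exists_extension hw
  obtain ⟨i, hi⟩ := h (x, w)
  exact hi.not_ge (hx i)

variable [Fintype ι]

variable (f) in
/-- Raising the right-hand sides by `t` raises a kept row's bound by `t` and a combined row's bound
by `t * (coeff f p - coeff f q)`; `scale f` dominates both factors. -/
def scale : 𝕜 := 1 + 2 * ∑ i, |coeff f i|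

lemma one_le_scale : 1 ≤ scale f :=
  le_add_of_nonneg_right (mul_nonneg zero_le_two (Finset.sum_nonneg fun _ _ => abs_nonneg _))

theorem rows_le_add_of_le {x t : 𝕜} {w : W} (ht : 0 ≤ t)
    (h : ∀ i, f i (x, w) ≤ b i + t) (k : Index f) :
    rows f k w ≤ bounds f b k + t * scale f := by
  have hsum (i : ι) : |coeff f i| ≤ ∑ j, |coeff f j| :=
    Finset.single_le_sum (f := fun j => |coeff f j|) (fun j _ => abs_nonneg _) (Finset.mem_univ i)
  rcases k with ⟨i, hi⟩ | ⟨⟨p, hp⟩, ⟨q, hq⟩⟩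
  · have := h i
    rw [apply_eq_mul_coeff_add, hi] at this
    simp only [rows, bounds]
    nlinarith [one_le_scale (f := f)]
  · have h1 := h p
    have h2 := h q
    rw [apply_eq_mul_coeff_add] at h1 h2
    simp only [rows, bounds, LinearMap.sub_apply, LinearMap.smul_apply, smul_eq_mul, scale]
    have hp' := hsum p
    have hq' := hsum q
    rw [abs_of_pos hp] at hp'
    rw [abs_of_neg hq] at hq'
    nlinarith

theorem isInfeasible_add_of_rows {s : 𝕜} (hs : 0 < s)
    (h : IsInfeasible (rows f) fun k => bounds f b k + s) :
    IsInfeasible f fun i => b i + s / scale f := by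
  rintro ⟨x, w⟩
  by_contra! hxw
  have hscale : 0 < scale f := zero_lt_one.trans_le one_le_scale
  obtain ⟨k, hk⟩ := h w
  have := rows_le_add_of_le (div_nonneg hs.le hscale.le) hxw k
  rw [div_mul_cancel₀ _ hscale.ne'] at this
  exact hk.not_ge this

end FourierMotzkin

variable [IsStrictOrderedRing 𝕜] {ι : Type*} [Fintype ι]

theorem IsInfeasible.exists_pos_add_pi {n : ℕ} {f : ι → (Fin n → 𝕜) →ₗ[𝕜] 𝕜} {b : ι → 𝕜}
    (h : IsInfeasible f b) : ∃ t > 0, IsInfeasible f fun i => b i + t := by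
  induction n generalizing ι with
  | zero =>
    obtain ⟨i, hi⟩ := h 0
    rw [map_zero] at hi
    refine ⟨-b i / 2, by linarith, fun v => ⟨i, ?_⟩⟩
    rw [Subsingleton.elim v 0, map_zero]
    linarith
  | succ n ih =>
    let e := Fin.consLinearEquiv 𝕜 fun _ : Fin (n + 1) => 𝕜
    have he := (isInfeasible_comp_linearEquiv_iff e).2 h
    obtain ⟨s, hs, hrows⟩ := ih (FourierMotzkin.isInfeasible_rows he)
    exact ⟨_, div_pos hs (zero_lt_one.trans_le FourierMotzkin.one_le_scale),
      (isInfeasible_comp_linearEquiv_iff e).1 (FourierMotzkin.isInfeasible_add_of_rows hs hrows)⟩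

theorem IsInfeasible.exists_pos_add {V : Type*} [AddCommGroup V] [Module 𝕜 V]
    [FiniteDimensional 𝕜 V] {f : ι → V →ₗ[𝕜] 𝕜} {b : ι → 𝕜} (h : IsInfeasible f b) :
    ∃ t > 0, IsInfeasible f fun i => b i + t := by
  let e := (finBasis 𝕜 V).equivFun.symm
  obtain ⟨t, ht, hf⟩ := ((isInfeasible_comp_linearEquiv_iff e).2 h).exists_pos_add_pi
  exact ⟨t, ht, (isInfeasible_comp_linearEquiv_iff e).1 hf⟩

end

/-- If `P = ⋂ᵢ {v : ⟨uᵢ, v⟩ ≤ aᵢ}` is a polyhedron disjoint from a polyhedron `P'`, then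
some thickening `P_t = ⋂ᵢ {v : ⟨uᵢ, v⟩ ≤ aᵢ + t}`, `t > 0`, is still disjoint from `P'`. -/
theorem exists_thickening_disjoint {V : Type*} [AddCommGroup V] [Module ℝ V]
    [FiniteDimensional ℝ V] {r : ℕ} (u : Fin r → (V →ₗ[ℝ] ℝ)) (a : Fin r → ℝ)
    (P' : Set V) (hP' : IsPolyhedron P')
    (hdisj : (⋂ i, {v : V | u i v ≤ a i}) ∩ P' = ∅) :
    ∃ t > (0 : ℝ), (⋂ i, {v : V | u i v ≤ a i + t}) ∩ P' = ∅ := by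
  obtain ⟨m, w, c, rfl⟩ := hP'
  have h : IsInfeasible (Sum.elim u w) (Sum.elim a c) := fun v => by
    by_contra! hv
    exact hdisj.subset
      ⟨Set.mem_iInter.2 fun i => hv (.inl i), Set.mem_iInter.2 fun j => hv (.inr j)⟩
  obtain ⟨t, ht, hinf⟩ := h.exists_pos_add
  refine ⟨t, ht, Set.eq_empty_of_forall_notMem fun v ⟨hu, hw⟩ => ?_⟩
  obtain ⟨i | j, hi⟩ := hinf v
  · exact hi.not_ge (Set.mem_iInter.1 hu i)
  · exact hi.not_ge ((Set.mem_iInter.1 hw j).trans (le_add_of_nonneg_right ht.le))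
end
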